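/- arXiv:1303.6925 — 4 statements merged into one kernel-verified Lean document; each statement's English description precedes it below -/
import Mathlib

section
/- Let E, S be Polish spaces each equipped with a filtration (B_t(E))_{t∈[0,1]}, (B_t(S))_{t∈[0,1]} of their Borel σ-fields, η ∈ P(E), ν ∈ P(S), and U : E → S a Borel map with U_*η = ν. Then the transference plan γ_U = (I_E × U)_*η is causal (i.e., for every t ∈ [0,1] and every B ∈ B_t(S), the map ω ↦ Θ_{γ_U}^ω(B) is measurable with respect to the η-augmentation F_t^η of B_t(E)) if and only if U is adapted, i.e., for every t ∈ [0,1], U⁻¹(B_t(S)) ⊆ F_t^η. -/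
open MeasureTheory ProbabilityTheory Filter Set Topology

noncomputable section

/-- The augmentation of a sub-σ-field `m` by the `η`-null sets. -/
def aug {α : Type*} [MeasurableSpace α] (η : Measure α) (m : MeasurableSpace α) :
    MeasurableSpace α :=
  m ⊔ MeasurableSpace.generateFrom {s : Set α | η s = 0}

lemma null_mem_aug {α : Type*} {mα : MeasurableSpace α} (η : Measure α) (m : MeasurableSpace α)
    {s : Set α} (hs : η s = 0) : MeasurableSet[@aug α mα η m] s :=
  (le_sup_right : MeasurableSpace.generateFrom {s : Set α | η s = 0} ≤ @aug α mα η m) _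
    (MeasurableSpace.measurableSet_generateFrom hs)

lemma measurableSet_aug_congr {α : Type*} {mα : MeasurableSpace α} {η : Measure α}
    {m : MeasurableSpace α} {s t : Set α} (hs : MeasurableSet[@aug α mα η m] s)
    (h : η {x | ¬ (x ∈ s ↔ x ∈ t)} = 0) : MeasurableSet[@aug α mα η m] t := by
  set N := {x | ¬ (x ∈ s ↔ x ∈ t)}
  have h1 : MeasurableSet[@aug α mα η m] (s ∩ N) :=
    null_mem_aug η m (measure_mono_null inter_subset_right h)
  have h2 : MeasurableSet[@aug α mα η m] (t ∩ N) :=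
    null_mem_aug η m (measure_mono_null inter_subset_right h)
  have : t = (s \ (s ∩ N)) ∪ (t ∩ N) := by
    ext x
    by_cases hx : x ∈ N
    · simp [hx]
    · have hx' : x ∈ s ↔ x ∈ t := not_not.mp hx
      simp [hx, hx'.symm]
  rw [this]
  exact (hs.diff h1).union h2

/-- `Θ` is a conditional probability kernel of `γ` with respect to `η`. -/
def IsCondKernel {E S : Type*} [MeasurableSpace E] [MeasurableSpace S]
    (η : Measure E) (γ : Measure (E × S)) (Θ : Kernel E S) : Prop :=
  IsMarkovKernel Θ ∧ ∀ A B, MeasurableSet A → MeasurableSet B →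
    γ (A ×ˢ B) = ∫⁻ ω in A, Θ ω B ∂η

/-- A plan `γ` on `E × S` with first marginal `η` is causal for the filtrations
`ℱE`, `ℱS` if it admits a conditional kernel `Θ` with respect to `η` such that for every
`t` and every `C ∈ ℱS t`, `ω ↦ Θ ω C` is measurable for the `η`-augmentation of `ℱE t`. -/
def CausalPlan {E S : Type*} [MeasurableSpace E] [MeasurableSpace S]
    (ℱE : unitInterval → MeasurableSpace E) (ℱS : unitInterval → MeasurableSpace S)
    (η : Measure E) (γ : Measure (E × S)) : Prop :=
  γ.fst = η ∧ ∃ Θ : Kernel E S, IsCondKernel η γ Θ ∧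
    ∀ t : unitInterval, ∀ C : Set S, MeasurableSet[ℱS t] C →
      Measurable[aug η (ℱE t)] (fun ω => Θ ω C)

/-- the plan `γ_U = (I_E × U)_* η` induced by a morphism `U` with `U_* η = ν`
is causal if and only if `U` is adapted, i.e. `U⁻¹(B_t(S)) ⊆ F_t^η` for all `t`. -/
theorem causal_graph_iff_adapted
    {E S : Type*} [MeasurableSpace E] [TopologicalSpace E] [PolishSpace E] [BorelSpace E]
    [MeasurableSpace S] [TopologicalSpace S] [PolishSpace S] [BorelSpace S]
    (ℱE : unitInterval → MeasurableSpace E) (ℱS : unitInterval → MeasurableSpace S)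
    (hmonoE : Monotone ℱE) (hleE : ∀ t, ℱE t ≤ ‹MeasurableSpace E›)
    (hmonoS : Monotone ℱS) (hleS : ∀ t, ℱS t ≤ ‹MeasurableSpace S›)
    (η : Measure E) [IsProbabilityMeasure η]
    (ν : Measure S) [IsProbabilityMeasure ν]
    (U : E → S) (hU : Measurable U) (hpush : η.map U = ν)
    (γU : Measure (E × S)) (hγU : γU = η.map (fun ω => (ω, U ω))) :
    CausalPlan ℱE ℱS η γU ↔
      ∀ t : unitInterval, ∀ C : Set S, MeasurableSet[ℱS t] C →
        MeasurableSet[aug η (ℱE t)] (U ⁻¹' C) := by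
  have hmeasPair : Measurable (fun ω : E => (ω, U ω)) := measurable_id.prodMk hU
  have hγ_apply : ∀ (A : Set E) (B : Set S), MeasurableSet A → MeasurableSet B →
      γU (A ×ˢ B) = η (A ∩ U ⁻¹' B) := by
    intro A B hA hB
    rw [hγU, Measure.map_apply hmeasPair (hA.prod hB)]
    congr 1
  constructor
  · rintro ⟨hfst, Θ, ⟨hMarkov, hker⟩, hmeas⟩ t C hC
    have hCmeas : MeasurableSet C := hleS t _ hC
    -- Θ · C = indicator (U⁻¹ C) a.e.
    have hae : (fun ω => Θ ω C) =ᵐ[η] (U ⁻¹' C).indicator (fun _ => (1 : ENNReal)) := by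
      refine ae_eq_of_forall_setLIntegral_eq_of_sigmaFinite
        (Θ.measurable_coe hCmeas) (measurable_const.indicator (hU hCmeas)) ?_
      intro A hA _
      rw [← hker A C hA hCmeas, hγ_apply A C hA hCmeas]
      rw [lintegral_indicator (hU hCmeas), Measure.restrict_restrict (hU hCmeas)]
      simp [Set.inter_comm]
    have hΘ := hmeas t C hC
    -- indicator is aug-measurable
    have hind : Measurable[aug η (ℱE t)] ((U ⁻¹' C).indicator (fun _ => (1 : ENNReal))) := by
      intro A hA
      refine measurableSet_aug_congr (hΘ hA) ?_
      refine measure_mono_null ?_ (ae_iff.mp hae)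
      intro x hx
      simp only [Set.mem_setOf_eq] at hx ⊢
      intro hxeq
      exact hx (by simp [Set.mem_preimage, hxeq])
    have : U ⁻¹' C =
        ((U ⁻¹' C).indicator (fun _ => (1 : ENNReal))) ⁻¹' {1} := by
      ext x
      by_cases hx : x ∈ U ⁻¹' C <;> simp [Set.indicator, hx]
    rw [this]
    exact hind (measurableSet_singleton 1)
  · intro hadapt
    refine ⟨?_, Kernel.deterministic U hU, ⟨inferInstance, ?_⟩, ?_⟩
    · rw [hγU, Measure.fst, Measure.map_map measurable_fst hmeasPair]
      exact Measure.map_id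
    · intro A B hA hB
      rw [hγ_apply A B hA hB]
      have : ∀ ω, Kernel.deterministic U hU ω B
          = (U ⁻¹' B).indicator (fun _ => (1 : ENNReal)) ω := by
        intro ω
        rw [Kernel.deterministic_apply' hU ω hB]
        by_cases hω : U ω ∈ B <;> simp [Set.indicator, hω]
      simp_rw [this]
      rw [lintegral_indicator (hU hB), Measure.restrict_restrict (hU hB)]
      simp [Set.inter_comm]
    · intro t C hC
      have hCmeas : MeasurableSet C := hleS t _ hC
      have : (fun ω => Kernel.deterministic U hU ω C)
          = (U ⁻¹' C).indicator (fun _ => (1 : ENNReal)) := by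
        funext ω
        rw [Kernel.deterministic_apply' hU ω hCmeas]
        by_cases hω : U ω ∈ C <;> simp [Set.indicator, hω]
      rw [this]
      exact measurable_const.indicator (hadapt t C hC)
end
end

section
/- Let (Ω, A, P) be a complete probability space, Y : Ω → E and X : Ω → S measurable maps into filtered Polish spaces. Then (Y×X)_*P is a causal transference plan from Y_*P to X_*P if and only if for every t ∈ [0,1] and every A ∈ B_t(S), P(X ∈ A | G_t^Y) = P(X ∈ A | σ(Y)) almost surely, where G_t^Y is the P-augmented filtration generated by Y. -/
/-! If `Θ` disintegrates `(Y, X)_*P` along `Y_*P`, then `ω ↦ Θ (Y ω) A` has the same integral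
as `1_{X ∈ A}` over every preimage `Y ⁻¹' B`. Every set of `σ(Y)` or of `G_t^Y` is such a
preimage up to a `P`-null set, so `Θ (Y ·) A` is a version of `P(X ∈ A | σ(Y))`, and also of
`P(X ∈ A | G_t^Y)` as soon as it is `G_t^Y`-measurable, which is what causality provides.
Conversely, if the two conditional probabilities agree, then `Θ (Y ·) A` is `G_t^Y`-measurable
up to a null set. Conditioning `Θ (·) A` on `B_t(E)` under `Y_*P` commutes with composition by
`Y`, so `Θ (·) A` coincides `Y_*P`-a.e. with a `B_t(E)`-measurable function: this is causality. -/

open MeasureTheory ProbabilityTheory Filter Set Topology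

noncomputable section

section Augmentation

variable {α β : Type*} {m m' : MeasurableSpace α} [mα : MeasurableSpace α] {μ : Measure α}

lemma le_aug : m ≤ aug μ m :=
  le_sup_left

lemma measurableSet_aug_of_null {s : Set α} (hs : μ s = 0) : MeasurableSet[aug μ m] s :=
  (le_sup_right : _ ≤ aug μ m) _ (MeasurableSpace.measurableSet_generateFrom hs)

lemma measurableSet_aug_of_ae_eq {s t : Set α} (ht : MeasurableSet[aug μ m] t)
    (hst : s =ᵐ[μ] t) : MeasurableSet[aug μ m] s := by
  rw [← symmDiff_symmDiff_cancel_left t s]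
  exact ht.symmDiff (measurableSet_aug_of_null (measure_symmDiff_eq_zero_iff.mpr hst.symm))

lemma measurable_aug_of_ae_eq [MeasurableSpace β] {f g : α → β}
    (hg : Measurable[aug μ m] g) (hfg : f =ᵐ[μ] g) : Measurable[aug μ m] f :=
  fun _ ht => measurableSet_aug_of_ae_eq (hg ht) (hfg.preimage _)

lemma aug_le (hm : m ≤ mα) (hnull : ∀ s, μ s = 0 → MeasurableSet s) :
    aug μ m ≤ mα :=
  sup_le hm (MeasurableSpace.generateFrom_le hnull)

lemma aug_mono (hm : m ≤ m') : aug μ m ≤ aug μ m' :=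
  sup_le_sup_right hm _

lemma exists_measurableSet_ae_eq_of_measurableSet_aug {s : Set α}
    (hs : MeasurableSet[aug μ m] s) : ∃ t, MeasurableSet[m] t ∧ s =ᵐ[μ] t := by
  let M : MeasurableSpace α :=
    { MeasurableSet' := fun s => ∃ t, MeasurableSet[m] t ∧ s =ᵐ[μ] t
      measurableSet_empty := ⟨∅, @MeasurableSet.empty α m, .rfl⟩
      measurableSet_compl := fun _ ⟨t, ht, hst⟩ => ⟨tᶜ, ht.compl, hst.compl⟩
      measurableSet_iUnion := fun _ hf =>
        ⟨⋃ n, (hf n).choose, @MeasurableSet.iUnion α _ m _ _ fun n => (hf n).choose_spec.1,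
          Filter.EventuallyEq.countable_iUnion fun n => (hf n).choose_spec.2⟩ }
  have hM : @aug α mα μ m ≤ M := by
    refine sup_le (fun t ht => ⟨t, ht, .rfl⟩) (MeasurableSpace.generateFrom_le fun t ht => ?_)
    exact ⟨∅, @MeasurableSet.empty α m, ae_eq_empty.mpr ht⟩
  exact hM s hs

lemma exists_preimage_ae_eq_of_measurableSet_aug_comap {n : MeasurableSpace β} {f : α → β}
    {s : Set α} (hs : MeasurableSet[aug μ (n.comap f)] s) :
    ∃ t, MeasurableSet[n] t ∧ s =ᵐ[μ] f ⁻¹' t := by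
  obtain ⟨_, ⟨t, ht, rfl⟩, hst⟩ := exists_measurableSet_ae_eq_of_measurableSet_aug hs
  exact ⟨t, ht, hst⟩

lemma aug_comap_le {n : MeasurableSpace β} [mβ : MeasurableSpace β] {f : α → β}
    (hf : Measurable f) (hn : n ≤ mβ) (hnull : ∀ s, μ s = 0 → MeasurableSet s) :
    aug μ (n.comap f) ≤ mα :=
  aug_le ((MeasurableSpace.comap_mono hn).trans hf.comap_le) hnull

lemma comap_aug_map_le {n : MeasurableSpace β} [MeasurableSpace β] {f : α → β}
    (hf : AEMeasurable f μ) : (aug (μ.map f) n).comap f ≤ aug μ (n.comap f) := by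
  rw [aug, aug, MeasurableSpace.comap_sup, MeasurableSpace.comap_generateFrom]
  refine sup_le_sup le_rfl (MeasurableSpace.generateFrom_le ?_)
  rintro _ ⟨t, ht, rfl⟩
  exact MeasurableSpace.measurableSet_generateFrom
    (nonpos_iff_eq_zero.mp ((Measure.le_map_apply hf t).trans_eq ht.out))

end Augmentation

section Pushforward

variable {Ω E : Type*} {mΩ : MeasurableSpace Ω} {m : MeasurableSpace E} [mE : MeasurableSpace E]
  {P : Measure Ω} [IsFiniteMeasure P] {Y : Ω → E}

lemma condExp_map_comp_ae_eq_condExp_aug_comap (hY : Measurable Y)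
    (hnull : ∀ s, P s = 0 → MeasurableSet s) (hm : m ≤ mE) {u : E → ℝ}
    (hu : Integrable u (P.map Y)) :
    (P.map Y)[u|m] ∘ Y =ᵐ[P] P[u ∘ Y | aug P (m.comap Y)] := by
  have hφ : StronglyMeasurable[m] ((P.map Y)[u|m]) := stronglyMeasurable_condExp
  refine ae_eq_condExp_of_forall_setIntegral_eq (aug_comap_le hY hm hnull) (hu.comp_measurable hY)
    (fun s _ _ => (integrable_condExp.comp_measurable hY).integrableOn) (fun s hs _ => ?_)
    ((hφ.measurable.comp (Measurable.of_comap_le le_rfl)).mono le_aug le_rfl).aestronglyMeasurable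
  obtain ⟨B, hB, hsB⟩ := exists_preimage_ae_eq_of_measurableSet_aug_comap hs
  rw [setIntegral_congr_set hsB, setIntegral_congr_set hsB, Function.comp_def, Function.comp_def,
    ← setIntegral_map (hm B hB) (hφ.mono hm).aestronglyMeasurable hY.aemeasurable,
    ← setIntegral_map (hm B hB) hu.aestronglyMeasurable hY.aemeasurable,
    setIntegral_condExp hm hu hB]

lemma measurable_aug_map_of_aestronglyMeasurable_comp (hY : Measurable Y)
    (hnull : ∀ s, P s = 0 → MeasurableSet s) (hm : m ≤ mE) {u : E → ℝ} (hu : Measurable u)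
    (hui : Integrable u (P.map Y)) (h : AEStronglyMeasurable[aug P (m.comap Y)] (u ∘ Y) P) :
    Measurable[aug (P.map Y) m] u := by
  have hφ : StronglyMeasurable[m] ((P.map Y)[u|m]) := stronglyMeasurable_condExp
  have hcomp : u ∘ Y =ᵐ[P] (P.map Y)[u|m] ∘ Y :=
    (condExp_of_aestronglyMeasurable' (aug_comap_le hY hm hnull) h
      (hui.comp_measurable hY)).symm.trans
      (condExp_map_comp_ae_eq_condExp_aug_comap hY hnull hm hui).symm
  have hae : u =ᵐ[P.map Y] (P.map Y)[u|m] :=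
    (ae_map_iff hY.aemeasurable (measurableSet_eq_fun hu (hφ.measurable.mono hm le_rfl))).mpr
      hcomp
  exact measurable_aug_of_ae_eq (hφ.measurable.mono le_aug le_rfl) hae

end Pushforward

section CondKernel

variable {Ω E S : Type*} {m mΩ : MeasurableSpace Ω} [mE : MeasurableSpace E] [MeasurableSpace S]
  {P : Measure Ω} {Y : Ω → E} {X : Ω → S} {Θ : Kernel E S} {A : Set S}

lemma isCondKernel_fst_condKernel [StandardBorelSpace S] [Nonempty S] (ρ : Measure (E × S))
    [IsFiniteMeasure ρ] : IsCondKernel ρ.fst ρ ρ.condKernel :=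
  ⟨inferInstance, fun _ _ hs ht => (Measure.setLIntegral_condKernel_eq_measure_prod hs ht).symm⟩

lemma ProbabilityTheory.Kernel.integrable_measureReal_apply (κ : Kernel E S) [IsMarkovKernel κ]
    (ν : Measure E) [IsFiniteMeasure ν] (hA : MeasurableSet A) :
    Integrable (fun e => (κ e).real A) ν :=
  .of_bound (κ.measurable_coe hA).ennreal_toReal.aestronglyMeasurable 1
    (ae_of_all _ fun _ => by
      rw [Real.norm_eq_abs, abs_of_nonneg measureReal_nonneg]
      exact measureReal_le_one)

lemma IsCondKernel.setIntegral_preimage (hY : Measurable Y) (hX : Measurable X)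
    (hΘ : IsCondKernel (P.map Y) (P.map fun ω => (Y ω, X ω)) Θ) (hA : MeasurableSet A)
    {B : Set E} (hB : MeasurableSet B) :
    ∫ ω in Y ⁻¹' B, (Θ (Y ω)).real A ∂P
      = ∫ ω in Y ⁻¹' B, A.indicator (fun _ => (1 : ℝ)) (X ω) ∂P := by
  have := hΘ.1
  have hΘA : Measurable fun e => Θ e A := Θ.measurable_coe hA
  calc ∫ ω in Y ⁻¹' B, (Θ (Y ω)).real A ∂P
      = ∫ e in B, (Θ e).real A ∂(P.map Y) :=
        (setIntegral_map hB hΘA.ennreal_toReal.aestronglyMeasurable hY.aemeasurable).symm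
    _ = (∫⁻ e in B, Θ e A ∂(P.map Y)).toReal :=
        integral_toReal hΘA.aemeasurable (ae_of_all _ fun _ => measure_lt_top _ _)
    _ = P.real (Y ⁻¹' B ∩ X ⁻¹' A) := by
        rw [← hΘ.2 B A hB hA, Measure.map_apply (hY.prodMk hX) (hB.prod hA)]
        rfl
    _ = ∫ ω in Y ⁻¹' B, (X ⁻¹' A).indicator (fun _ => (1 : ℝ)) ω ∂P := by
        rw [integral_indicator_const _ (hX hA), measureReal_restrict_apply (hX hA), smul_eq_mul,
          mul_one, inter_comm]

lemma IsCondKernel.measureReal_comp_ae_eq_condExp (hY : Measurable Y) (hX : Measurable X)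
    (hΘ : IsCondKernel (P.map Y) (P.map fun ω => (Y ω, X ω)) Θ) (hA : MeasurableSet A)
    [IsFiniteMeasure P] (hm : m ≤ mΩ) (hmY : m ≤ aug P (mE.comap Y))
    (hmeas : AEStronglyMeasurable[m] (fun ω => (Θ (Y ω)).real A) P) :
    (fun ω => (Θ (Y ω)).real A) =ᵐ[P] P[fun ω => A.indicator (fun _ => (1 : ℝ)) (X ω) | m] := by
  have := hΘ.1
  refine ae_eq_condExp_of_forall_setIntegral_eq hm ((integrable_const 1).indicator (hX hA))
    (fun _ _ _ => ((Θ.integrable_measureReal_apply _ hA).comp_measurable hY).integrableOn)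
    (fun s hs _ => ?_) hmeas
  obtain ⟨B, hB, hsB⟩ := exists_preimage_ae_eq_of_measurableSet_aug_comap (hmY s hs)
  rw [setIntegral_congr_set hsB, setIntegral_congr_set hsB]
  exact hΘ.setIntegral_preimage hY hX hA hB

lemma IsCondKernel.measureReal_comp_ae_eq_condExp_comap (hY : Measurable Y) (hX : Measurable X)
    (hΘ : IsCondKernel (P.map Y) (P.map fun ω => (Y ω, X ω)) Θ) (hA : MeasurableSet A)
    [IsFiniteMeasure P] :
    (fun ω => (Θ (Y ω)).real A) =ᵐ[P]
      P[fun ω => A.indicator (fun _ => (1 : ℝ)) (X ω) | mE.comap Y] :=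
  hΘ.measureReal_comp_ae_eq_condExp hY hX hA hY.comap_le le_aug
    ((Θ.measurable_coe hA).ennreal_toReal.comp (Measurable.of_comap_le le_rfl)).aestronglyMeasurable

end CondKernel

theorem causal_coupling_iff_condexp_general
    {E S Ω : Type*} [MeasurableSpace E]
    [MeasurableSpace S] [TopologicalSpace S] [PolishSpace S] [BorelSpace S]
    [MeasurableSpace Ω]
    (ℱE : unitInterval → MeasurableSpace E) (ℱS : unitInterval → MeasurableSpace S)
    (hleE : ∀ t, ℱE t ≤ ‹MeasurableSpace E›)
    (hleS : ∀ t, ℱS t ≤ ‹MeasurableSpace S›)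
    (P : Measure Ω) [IsProbabilityMeasure P] (hcomplete : ∀ s : Set Ω, P s = 0 → MeasurableSet s)
    (Y : Ω → E) (hY : Measurable Y) (X : Ω → S) (hX : Measurable X)
    (γ : Measure (E × S)) (hγ : γ = P.map (fun ω => (Y ω, X ω))) :
    CausalPlan ℱE ℱS (P.map Y) γ ↔
      ∀ t : unitInterval, ∀ A : Set S, MeasurableSet[ℱS t] A →
        P[(fun ω => Set.indicator A (fun _ => (1 : ℝ)) (X ω)) |
            aug P (MeasurableSpace.comap Y (ℱE t))]
          =ᵐ[P]
        P[(fun ω => Set.indicator A (fun _ => (1 : ℝ)) (X ω)) |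
            MeasurableSpace.comap Y ‹MeasurableSpace E›] := by
  subst hγ
  constructor
  · rintro ⟨-, Θ, hΘ, hcausal⟩ t A hA
    have hAm := hleS t A hA
    have hmeas : Measurable[aug P ((ℱE t).comap Y)] fun ω => (Θ (Y ω)).real A :=
      (((hcausal t A hA).comp (Measurable.of_comap_le le_rfl)).mono
        (comap_aug_map_le hY.aemeasurable) le_rfl).ennreal_toReal
    exact (hΘ.measureReal_comp_ae_eq_condExp hY hX hAm (aug_comap_le hY (hleE t) hcomplete)
      (aug_mono (MeasurableSpace.comap_mono (hleE t))) hmeas.aestronglyMeasurable).symm.trans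
      (hΘ.measureReal_comp_ae_eq_condExp_comap hY hX hAm)
  · intro hcond
    have : Nonempty S := (nonempty_of_isProbabilityMeasure P).map X
    have hfst : (P.map fun ω => (Y ω, X ω)).fst = P.map Y := Measure.fst_map_prodMk hX
    have hΘ := isCondKernel_fst_condKernel (P.map fun ω => (Y ω, X ω))
    rw [hfst] at hΘ
    refine ⟨hfst, _, hΘ, fun t C hC => ?_⟩
    have hCm := hleS t C hC
    have hu := measurable_aug_map_of_aestronglyMeasurable_comp hY hcomplete (hleE t)
      (Kernel.measurable_coe _ hCm).ennreal_toReal (Kernel.integrable_measureReal_apply _ _ hCm)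
      ⟨_, stronglyMeasurable_condExp,
        (hΘ.measureReal_comp_ae_eq_condExp_comap hY hX hCm).trans (hcond t C hC).symm⟩
    simpa only [ne_eq, measure_ne_top, not_false_eq_true, ENNReal.ofReal_toReal] using
      hu.ennreal_ofReal

/-- `(Y×X)_*P` is a causal plan from `Y_*P` to `X_*P` iff for every `t` and
every `A ∈ B_t(S)`, `P(X ∈ A | G_t^Y) = P(X ∈ A | σ(Y))` a.s. -/
theorem causal_coupling_iff_condexp
    {E S Ω : Type*} [MeasurableSpace E] [TopologicalSpace E] [PolishSpace E] [BorelSpace E]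
    [MeasurableSpace S] [TopologicalSpace S] [PolishSpace S] [BorelSpace S]
    [MeasurableSpace Ω]
    (ℱE : unitInterval → MeasurableSpace E) (ℱS : unitInterval → MeasurableSpace S)
    (hmonoE : Monotone ℱE) (hleE : ∀ t, ℱE t ≤ ‹MeasurableSpace E›)
    (hmonoS : Monotone ℱS) (hleS : ∀ t, ℱS t ≤ ‹MeasurableSpace S›)
    (P : Measure Ω) [IsProbabilityMeasure P] (hcomplete : ∀ s : Set Ω, P s = 0 → MeasurableSet s)
    (Y : Ω → E) (hY : Measurable Y) (X : Ω → S) (hX : Measurable X)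
    (γ : Measure (E × S)) (hγ : γ = P.map (fun ω => (Y ω, X ω))) :
    CausalPlan ℱE ℱS (P.map Y) γ ↔
      ∀ t : unitInterval, ∀ A : Set S, MeasurableSet[ℱS t] A →
        P[(fun ω => Set.indicator A (fun _ => (1 : ℝ)) (X ω)) |
            aug P (MeasurableSpace.comap Y (ℱE t))]
          =ᵐ[P]
        P[(fun ω => Set.indicator A (fun _ => (1 : ℝ)) (X ω)) |
            MeasurableSpace.comap Y ‹MeasurableSpace E›] :=
  causal_coupling_iff_condexp_general ℱE ℱS hleE hleS P hcomplete Y hY X hX γ hγ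
end
end

section
/- Let E, S be Polish spaces and η ∈ P(E). The map j : L⁰(η, S) → P^S(η) sending U to (I_E × U)_*η is a homeomorphism onto its image, where L⁰(η,S) carries the topology of convergence in probability and P^S(η) carries the topology of weak convergence of measures. -/
/-!
The graph measure of `U` charges only the graph of `U`, which recovers `U` up to null sets.
Convergence in probability gives weak convergence of the graph measures by passing to a.e.
convergent subsequences and dominated convergence. Conversely, by Lusin's theorem `U` is
continuous on a closed set `K` of almost full measure, so `{(ω, s) | ω ∈ K, ε ≤ d(s, U ω)}` is
closed; it is null for the graph measure of `U`, and the portmanteau theorem makes its measure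
for the graph measure of `Uₙ`, which bounds `η {ε ≤ d(Uₙ, U)}` up to `η Kᶜ`, tend to zero.
-/

open MeasureTheory Filter Set Topology
open scoped ENNReal BoundedContinuousFunction

section Lusin

open TopologicalSpace

variable {E : Type*} [MeasurableSpace E] [TopologicalSpace E] {η : Measure E}

theorem MeasurableSet.exists_isClosed_isOpen_sdiff_lt [OpensMeasurableSpace E]
    [IsFiniteMeasure η] [η.WeaklyRegular] {A : Set E} (hA : MeasurableSet A) {ε : ℝ≥0∞}
    (hε : ε ≠ 0) : ∃ F O, F ⊆ A ∧ A ⊆ O ∧ IsClosed F ∧ IsOpen O ∧ η (O \ F) < ε := by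
  have hε2 : ε / 2 ≠ 0 := ENNReal.half_pos hε |>.ne'
  obtain ⟨F, hFA, hF, hAF⟩ := hA.exists_isClosed_sdiff_lt (measure_ne_top η A) hε2
  obtain ⟨O, hAO, hO, -, hOA⟩ := hA.exists_isOpen_sdiff_lt (measure_ne_top η A) hε2
  refine ⟨F, O, hFA, hAO, hF, hO, ?_⟩
  calc η (O \ F) ≤ η (O \ A) + η (A \ F) := by
        rw [← sdiff_union_sdiff_cancel hAO hFA]; exact measure_union_le _ _
    _ < ε / 2 + ε / 2 := ENNReal.add_lt_add hOA hAF
    _ = ε := ENNReal.add_halves ε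

/-- **Lusin's theorem** -/
theorem Measurable.exists_isClosed_measure_compl_lt_continuousOn [OpensMeasurableSpace E]
    [IsFiniteMeasure η] [η.WeaklyRegular] {S : Type*} [TopologicalSpace S]
    [SecondCountableTopology S] [MeasurableSpace S] [OpensMeasurableSpace S] {U : E → S}
    (hU : Measurable U) {ε : ℝ≥0∞} (hε : ε ≠ 0) :
    ∃ K, IsClosed K ∧ η Kᶜ < ε ∧ ContinuousOn U K := by
  let B := countableBasis S
  have : Countable B := (countable_countableBasis S).to_subtype
  obtain ⟨δ, hδ, hδε⟩ := ENNReal.exists_pos_sum_of_countable hε B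
  choose F O hFU hUO hF hO hOF using fun V : B =>
    (hU (isOpen_of_mem_countableBasis V.2).measurableSet).exists_isClosed_isOpen_sdiff_lt
      (η := η) (ENNReal.coe_ne_zero.mpr (hδ V).ne')
  -- On `F V ∪ (O V)ᶜ` the preimage of `V` coincides with the open set `O V`.
  refine ⟨⋂ V, F V ∪ (O V)ᶜ, isClosed_iInter fun V => (hF V).union (hO V).isClosed_compl, ?_, ?_⟩
  · calc η (⋂ V, F V ∪ (O V)ᶜ)ᶜ = η (⋃ V, O V \ F V) := by
          simp only [compl_iInter, compl_union, compl_compl, sdiff_eq, inter_comm]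
      _ ≤ ∑' V, η (O V \ F V) := measure_iUnion_le _
      _ ≤ ∑' V, (δ V : ℝ≥0∞) := ENNReal.tsum_le_tsum fun V => (hOF V).le
      _ < ε := hδε
  · refine (isBasis_countableBasis S).continuousOn_iff.mpr fun V hV => ⟨O ⟨V, hV⟩, hO _, ?_⟩
    ext x
    simp only [mem_inter_iff, mem_iInter, mem_preimage]
    exact and_congr_left fun hx =>
      ⟨fun h => hUO _ h, fun h => (hx ⟨V, hV⟩).elim (fun hF => hFU _ hF) (absurd h)⟩

end Lusin

section Graph

variable {E S : Type*} [MeasurableSpace E] [MeasurableSpace S]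

noncomputable def graphMeasure (η : Measure E) (U : E → S) : Measure (E × S) :=
  η.map fun ω => (ω, U ω)

variable {η : Measure E} {U : E → S}

instance [IsFiniteMeasure η] : IsFiniteMeasure (graphMeasure η U) := by
  unfold graphMeasure; infer_instance

theorem measurable_graph (hU : Measurable U) : Measurable fun ω => (ω, U ω) :=
  measurable_id.prodMk hU

theorem graphMeasure_apply (hU : Measurable U) {s : Set (E × S)} (hs : MeasurableSet s) :
    graphMeasure η U s = η {ω | (ω, U ω) ∈ s} :=
  Measure.map_apply (measurable_graph hU) hs

theorem graphMeasure_eq_iff_ae_eq [MeasurableEq S] {V : E → S} (hU : Measurable U)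
    (hV : Measurable V) : graphMeasure η U = graphMeasure η V ↔ U =ᵐ[η] V := by
  refine ⟨fun h => ?_, fun h => Measure.map_congr (h.mono fun ω hω => by simp only [hω])⟩
  have hG : MeasurableSet {p : E × S | U p.1 ≠ p.2} :=
    (measurableSet_eq_fun (hU.comp measurable_fst) measurable_snd).compl
  have hUV : η {ω | U ω ≠ V ω} = 0 := by
    simpa [graphMeasure_apply hU hG, graphMeasure_apply hV hG] using
      congrArg (· {p : E × S | U p.1 ≠ p.2}) h.symm
  exact ae_iff.mpr hUV

theorem integral_graphMeasure [TopologicalSpace E] [TopologicalSpace S]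
    [OpensMeasurableSpace (E × S)] (hU : Measurable U) (f : E × S →ᵇ ℝ) :
    ∫ p, f p ∂graphMeasure η U = ∫ ω, f (ω, U ω) ∂η :=
  integral_map (measurable_graph hU).aemeasurable f.continuous.aestronglyMeasurable

theorem tendsto_integral_graphMeasure_of_tendstoInMeasure [TopologicalSpace E]
    [PseudoEMetricSpace S] [OpensMeasurableSpace (E × S)] [IsFiniteMeasure η] {Useq : ℕ → E → S}
    (hUseq : ∀ n, Measurable (Useq n)) (hU : Measurable U)
    (h : TendstoInMeasure η Useq atTop U) (f : E × S →ᵇ ℝ) :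
    Tendsto (fun n => ∫ p, f p ∂graphMeasure η (Useq n)) atTop
      (𝓝 (∫ p, f p ∂graphMeasure η U)) := by
  simp only [integral_graphMeasure (hUseq _), integral_graphMeasure hU]
  refine tendsto_of_subseq_tendsto fun ns hns => ?_
  obtain ⟨ms, -, hae⟩ := (h.comp hns).exists_seq_tendsto_ae
  refine ⟨ms, tendsto_integral_of_dominated_convergence (fun _ => ‖f‖)
    (fun _ => (f.continuous.measurable.comp (measurable_graph (hUseq _))).aestronglyMeasurable)
    (integrable_const _) (fun _ => ae_of_all _ fun ω => f.norm_coe_le_norm _) ?_⟩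
  filter_upwards [hae] with ω hω
  exact (f.continuous.tendsto _).comp (tendsto_const_nhds.prodMk_nhds hω)

theorem tendstoInMeasure_of_tendsto_integral_graphMeasure [TopologicalSpace E]
    [TopologicalSpace.PseudoMetrizableSpace E] [BorelSpace E] [PseudoEMetricSpace S]
    [SecondCountableTopology S] [OpensMeasurableSpace S] [IsFiniteMeasure η]
    {Useq : ℕ → E → S} (hUseq : ∀ n, Measurable (Useq n)) (hU : Measurable U)
    (h : ∀ f : E × S →ᵇ ℝ, Tendsto (fun n => ∫ p, f p ∂graphMeasure η (Useq n)) atTop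
      (𝓝 (∫ p, f p ∂graphMeasure η U))) :
    TendstoInMeasure η Useq atTop U := by
  let π : ℕ → FiniteMeasure (E × S) := fun n => ⟨graphMeasure η (Useq n), inferInstance⟩
  have hπ : Tendsto π atTop (𝓝 ⟨graphMeasure η U, inferInstance⟩) :=
    FiniteMeasure.tendsto_iff_forall_integral_tendsto.mpr h
  intro ε hε
  refine ENNReal.tendsto_nhds_zero.mpr fun δ hδ => ?_
  obtain ⟨K, hK, hKδ, hUK⟩ :=
    hU.exists_isClosed_measure_compl_lt_continuousOn (η := η) (ENNReal.half_pos hδ.ne').ne'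
  let C := K ×ˢ univ ∩ (fun p : E × S => edist p.2 (U p.1)) ⁻¹' Ici ε
  have hC : IsClosed C := ContinuousOn.preimage_isClosed_of_isClosed
    (continuous_edist.comp_continuousOn (continuousOn_snd.prodMk
      (hUK.comp continuousOn_fst fun p hp => hp.1))) (hK.prod isClosed_univ) isClosed_Ici
  have hCU : graphMeasure η U C = 0 := by
    simp [graphMeasure_apply hU hC.measurableSet, C, not_le.mpr hε]
  have hCn : ∀ᶠ n in atTop, graphMeasure η (Useq n) C < δ / 2 :=
    eventually_lt_of_limsup_lt <| (FiniteMeasure.limsup_measure_closed_le_of_tendsto hπ hC).trans_lt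
      (by simpa [hCU] using ENNReal.half_pos hδ.ne')
  filter_upwards [hCn] with n hn
  calc η {ω | ε ≤ edist (Useq n ω) (U ω)}
      ≤ η Kᶜ + graphMeasure η (Useq n) C := by
        rw [graphMeasure_apply (hUseq n) hC.measurableSet]
        refine (measure_mono fun ω hω => ?_).trans (measure_union_le _ _)
        by_cases hωK : ω ∈ K
        · exact Or.inr ⟨⟨hωK, trivial⟩, hω⟩
        · exact Or.inl hωK
    _ ≤ δ / 2 + δ / 2 := add_le_add hKδ.le hn.le
    _ = δ := ENNReal.add_halves δ

end Graph

theorem embedding_L0_into_plans_general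
    {E S : Type*} [MeasurableSpace E] [TopologicalSpace E] [PolishSpace E] [BorelSpace E]
    [MeasurableSpace S] [MetricSpace S] [SecondCountableTopology S]
    [BorelSpace S]
    (η : Measure E) [IsProbabilityMeasure η] :
    (∀ U V : E → S, Measurable U → Measurable V →
      (η.map (fun ω => (ω, U ω)) = η.map (fun ω => (ω, V ω)) ↔ U =ᵐ[η] V)) ∧
    (∀ (Useq : ℕ → E → S) (U : E → S), (∀ n, Measurable (Useq n)) → Measurable U →
      (TendstoInMeasure η Useq atTop U ↔
        ∀ f : BoundedContinuousFunction (E × S) ℝ,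
          Tendsto (fun n => ∫ x, f x ∂(η.map (fun ω => (ω, Useq n ω)))) atTop
            (𝓝 (∫ x, f x ∂(η.map (fun ω => (ω, U ω))))))) :=
  ⟨fun _ _ hU hV => graphMeasure_eq_iff_ae_eq hU hV, fun _ _ hUseq hU =>
    ⟨tendsto_integral_graphMeasure_of_tendstoInMeasure hUseq hU,
      tendstoInMeasure_of_tendsto_integral_graphMeasure hUseq hU⟩⟩

/-- the map `j : L⁰(η,S) → P^S(η)`, `U ↦ (I_E × U)_* η`, is a homeomorphism
onto its image: it is injective on a.e.-classes, and (both topologies being metrizable,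
via a sequential characterization) it is continuous with continuous inverse: a sequence of
maps converges in probability iff the associated plans converge weakly in measure. -/
theorem embedding_L0_into_plans
    {E S : Type*} [MeasurableSpace E] [TopologicalSpace E] [PolishSpace E] [BorelSpace E]
    [MeasurableSpace S] [MetricSpace S] [CompleteSpace S] [SecondCountableTopology S]
    [BorelSpace S]
    (η : Measure E) [IsProbabilityMeasure η] :
    (∀ U V : E → S, Measurable U → Measurable V →
      (η.map (fun ω => (ω, U ω)) = η.map (fun ω => (ω, V ω)) ↔ U =ᵐ[η] V)) ∧
    (∀ (Useq : ℕ → E → S) (U : E → S), (∀ n, Measurable (Useq n)) → Measurable U →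
      (TendstoInMeasure η Useq atTop U ↔
        ∀ f : BoundedContinuousFunction (E × S) ℝ,
          Tendsto (fun n => ∫ x, f x ∂(η.map (fun ω => (ω, Useq n ω)))) atTop
            (𝓝 (∫ x, f x ∂(η.map (fun ω => (ω, U ω))))))) :=
  embedding_L0_into_plans_general η
end

section
/- Let W = C([0,1], ℝ^d) with the coordinate filtration, and (Ω, A, P) complete with Y : Ω → W a Brownian motion with respect to its own filtration and X : Ω → S measurable. Then Y is a Brownian motion with respect to σ(G_t^X ∪ G_t^Y) if and only if there exists some filtration (A_t) on Ω such that Y is an (A_t)-Brownian motion and X is (A_t)-adapted. -/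
open MeasureTheory ProbabilityTheory Filter Set Topology
open scoped ENNReal NNReal

noncomputable section

/-- The classical Wiener path space `W = C([0,1], ℝ^d)`. -/
abbrev WW (d : ℕ) := C(unitInterval, EuclideanSpace ℝ (Fin d))

instance (d : ℕ) : MeasurableSpace (WW d) := borel _
instance (d : ℕ) : BorelSpace (WW d) := ⟨rfl⟩

/-- The filtration generated by the coordinate process on `W`. -/
def coordF (d : ℕ) (t : unitInterval) : MeasurableSpace (WW d) :=
  ⨆ (s : unitInterval) (_ : s ≤ t),
    MeasurableSpace.comap (fun ω : WW d => ω s) inferInstance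

/-- `Y : Ω → W` is a `d`-dimensional Brownian motion with respect to the filtration `𝒜`
under `P`: it is `𝒜`-adapted, starts at `0`, and has increments which are Gaussian with
variance `t - s` and independent of `𝒜 s`. -/
def IsBMWrt {d : ℕ} {Ω : Type*} [MeasurableSpace Ω]
    (𝒜 : unitInterval → MeasurableSpace Ω) (Y : Ω → WW d) (P : Measure Ω) : Prop :=
  (∀ t : unitInterval, Measurable[𝒜 t] (fun ω => Y ω t)) ∧
  (∀ᵐ ω ∂P, Y ω 0 = 0) ∧
  (∀ s t : unitInterval, s ≤ t →
    (∀ i : Fin d,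
      P.map (fun ω => Y ω t i - Y ω s i) = gaussianReal 0 (Real.toNNReal ((t : ℝ) - s))) ∧
    Indep (MeasurableSpace.comap (fun ω => Y ω t - Y ω s) inferInstance) (𝒜 s) P)

/-- `μ` is the Wiener measure on `W`. -/
def IsWienerMeasure {d : ℕ} (μ : Measure (WW d)) : Prop :=
  IsProbabilityMeasure μ ∧ IsBMWrt (coordF d) (fun ω => ω) μ


section Aux

variable {Ω' : Type*}

/-- The σ-algebra of measurable sets of probability 0 or 1. -/
def trivialM [mΩ : MeasurableSpace Ω'] (P : Measure Ω') [IsProbabilityMeasure P] :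
    MeasurableSpace Ω' where
  MeasurableSet' s := MeasurableSet s ∧ (P s = 0 ∨ P s = 1)
  measurableSet_empty := ⟨MeasurableSet.empty, Or.inl measure_empty⟩
  measurableSet_compl s hs := by
    refine ⟨hs.1.compl, ?_⟩
    have h := measure_compl hs.1 (measure_ne_top P s)
    rcases hs.2 with h0 | h1
    · right; rw [h, h0, measure_univ]; simp
    · left; rw [h, h1, measure_univ]; simp
  measurableSet_iUnion f hf := by
    refine ⟨MeasurableSet.iUnion fun i => (hf i).1, ?_⟩
    by_cases h : ∃ i, P (f i) = 1
    · obtain ⟨i, hi⟩ := h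
      right
      refine le_antisymm prob_le_one ?_
      calc (1 : ℝ≥0∞) = P (f i) := hi.symm
        _ ≤ P (⋃ i, f i) := measure_mono (Set.subset_iUnion f i)
    · left
      push_neg at h
      refine measure_iUnion_null fun i => ?_
      rcases (hf i).2 with h0 | h1
      · exact h0
      · exact absurd h1 (h i)

lemma generateFrom_null_le_trivialM [mΩ : MeasurableSpace Ω'] (P : Measure Ω')
    [IsProbabilityMeasure P] (hcomplete : ∀ s : Set Ω', P s = 0 → MeasurableSet s) :
    MeasurableSpace.generateFrom {s : Set Ω' | P s = 0} ≤ trivialM P :=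
  MeasurableSpace.generateFrom_le fun s hs => ⟨hcomplete s hs, Or.inl hs⟩

lemma indep_mono [mΩ : MeasurableSpace Ω'] {P : Measure Ω'}
    {m₁ m₂ m₁' m₂' : MeasurableSpace Ω'} (h : Indep m₁ m₂ P)
    (h1 : m₁' ≤ m₁) (h2 : m₂' ≤ m₂) : Indep m₁' m₂' P :=
  (Indep_iff _ _ _).2 fun t1 t2 ht1 ht2 =>
    (Indep_iff _ _ _).1 h t1 t2 (h1 _ ht1) (h2 _ ht2)

lemma indep_sup_trivial [mΩ : MeasurableSpace Ω'] {P : Measure Ω'} [IsProbabilityMeasure P]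
    {m₁ m₂ m₃ : MeasurableSpace Ω'} (h1 : m₁ ≤ mΩ) (h2 : m₂ ≤ mΩ)
    (h3 : ∀ s, MeasurableSet[m₃] s → MeasurableSet[mΩ] s ∧ (P s = 0 ∨ P s = 1))
    (h12 : Indep m₁ m₂ P) : Indep m₁ (m₂ ⊔ m₃) P := by
  have h3le : m₃ ≤ mΩ := fun s hs => (h3 s hs).1
  set p1 : Set (Set Ω') := {s | MeasurableSet[m₁] s} with hp1def
  set p2 : Set (Set Ω') :=
    {s | ∃ B C, MeasurableSet[m₂] B ∧ MeasurableSet[m₃] C ∧ s = B ∩ C} with hp2def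
  refine ProbabilityTheory.IndepSets.indep (p1 := p1) (p2 := p2) h1 (sup_le h2 h3le) ?_ ?_ ?_ ?_ ?_
  · intro s hs t ht _
    exact MeasurableSet.inter hs ht
  · rintro s ⟨B, C, hB, hC, rfl⟩ t ⟨B', C', hB', hC', rfl⟩ _
    exact ⟨B ∩ B', C ∩ C', hB.inter hB', hC.inter hC', by
      rw [Set.inter_inter_inter_comm]⟩
  · exact (@MeasurableSpace.generateFrom_measurableSet Ω' m₁).symm
  · refine le_antisymm ?_ (MeasurableSpace.generateFrom_le ?_)
    · refine sup_le ?_ ?_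
      · intro s hs
        exact MeasurableSpace.measurableSet_generateFrom
          ⟨s, Set.univ, hs, MeasurableSet.univ, (Set.inter_univ s).symm⟩
      · intro s hs
        exact MeasurableSpace.measurableSet_generateFrom
          ⟨Set.univ, s, MeasurableSet.univ, hs, (Set.univ_inter s).symm⟩
    · rintro s ⟨B, C, hB, hC, rfl⟩
      exact MeasurableSet.inter (le_sup_left (a := m₂) (b := m₃) _ hB)
        (le_sup_right (a := m₂) (b := m₃) _ hC)
  · rintro A s hA ⟨B, C, hB, hC, rfl⟩
    have key := (Indep_iff _ _ _).1 h12
    have main : P (A ∩ (B ∩ C)) = P A * P (B ∩ C) := by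
      rcases (h3 C hC).2 with h0 | h1'
      · have hABC : P (A ∩ (B ∩ C)) = 0 :=
          measure_mono_null (fun x hx => hx.2.2) h0
        have hBC : P (B ∩ C) = 0 := measure_mono_null (fun x hx => hx.2) h0
        rw [hABC, hBC, mul_zero]
      · have hCc : P Cᶜ = 0 := by
          have h := measure_compl (h3 C hC).1 (measure_ne_top P C)
          rw [h, h1', measure_univ]; simp
        rw [← Set.inter_assoc, measure_inter_conull hCc, measure_inter_conull hCc]
        exact key A B hA hB
    refine Filter.Eventually.of_forall fun a => ?_
    simpa using main

end Aux

lemma coordF_mono (d : ℕ) : Monotone (coordF d) := by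
  intro a b hab
  exact iSup₂_le fun s hs => le_iSup₂_of_le s (hs.trans hab) le_rfl

lemma coordF_le (d : ℕ) (t : unitInterval) : coordF d t ≤ (inferInstance : MeasurableSpace (WW d)) := by
  refine iSup₂_le fun s _ => ?_
  exact Measurable.comap_le (continuous_eval_const s).measurable

lemma aug_mono_s15 {α : Type*} [i : MeasurableSpace α] (η : Measure α) {m m' : MeasurableSpace α}
    (h : m ≤ m') : @aug α i η m ≤ @aug α i η m' :=
  sup_le_sup_right h _

lemma aug_le_s15 {α : Type*} [i : MeasurableSpace α] {η : Measure α} {m : MeasurableSpace α}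
    (hm : m ≤ i) (hc : ∀ s : Set α, η s = 0 → MeasurableSet[i] s) :
    @aug α i η m ≤ i :=
  sup_le hm (MeasurableSpace.generateFrom_le fun s hs => hc s hs)

/-- `Y` is a Brownian motion with respect to `σ(G_t^X ∪ G_t^Y)` iff there
exists a filtration `(𝒜_t)` such that `Y` is an `(𝒜_t)`-Brownian motion and `X` is
`(𝒜_t)`-adapted. -/
theorem joint_BM_iff_exists_filtration
    {d : ℕ} {S Ω : Type*}
    [MeasurableSpace S] [TopologicalSpace S] [PolishSpace S] [BorelSpace S]
    [MeasurableSpace Ω]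
    (ℱS : unitInterval → MeasurableSpace S)
    (hmonoS : Monotone ℱS) (hleS : ∀ t, ℱS t ≤ ‹MeasurableSpace S›)
    (P : Measure Ω) [IsProbabilityMeasure P]
    (hcomplete : ∀ s : Set Ω, P s = 0 → MeasurableSet s)
    (Y : Ω → WW d) (hY : Measurable Y) (X : Ω → S) (hX : Measurable X)
    (hBM : IsBMWrt (fun t => aug P (MeasurableSpace.comap Y (coordF d t))) Y P) :
    IsBMWrt (fun t =>
        aug P (MeasurableSpace.comap X (ℱS t)) ⊔ aug P (MeasurableSpace.comap Y (coordF d t)))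
        Y P ↔
      ∃ 𝒜 : unitInterval → MeasurableSpace Ω, Monotone 𝒜 ∧
        (∀ t, 𝒜 t ≤ ‹MeasurableSpace Ω›) ∧ IsBMWrt 𝒜 Y P ∧
        ∀ t, aug P (MeasurableSpace.comap X (ℱS t)) ≤ 𝒜 t := by
  constructor
  · intro h
    refine ⟨fun t => aug P (MeasurableSpace.comap X (ℱS t)) ⊔
        aug P (MeasurableSpace.comap Y (coordF d t)), ?_, ?_, h, fun t => le_sup_left⟩
    · intro a b hab
      exact sup_le_sup (aug_mono_s15 P (MeasurableSpace.comap_mono (hmonoS hab)))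
        (aug_mono_s15 P (MeasurableSpace.comap_mono (coordF_mono d hab)))
    · intro t
      refine sup_le ?_ ?_
      · exact aug_le_s15 (le_trans (MeasurableSpace.comap_mono (hleS t)) hX.comap_le) hcomplete
      · exact aug_le_s15 (le_trans (MeasurableSpace.comap_mono (coordF_le d t)) hY.comap_le)
          hcomplete
  · rintro ⟨𝒜, hmono, hle, hBM𝒜, hadX⟩
    have heval : ∀ s : unitInterval, Measurable (fun ω : WW d => ω s) := fun s =>
      (continuous_eval_const s).measurable
    have hcomapY : ∀ t : unitInterval, MeasurableSpace.comap Y (coordF d t) ≤ 𝒜 t := by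
      intro t
      rw [coordF, MeasurableSpace.comap_iSup]
      refine iSup_le fun s => ?_
      rw [MeasurableSpace.comap_iSup]
      refine iSup_le fun hs => ?_
      rw [MeasurableSpace.comap_comp]
      have : Measurable[𝒜 s] (fun ω => Y ω s) := hBM𝒜.1 s
      exact le_trans this.comap_le (hmono hs)
    have htriv : ∀ s, MeasurableSet[MeasurableSpace.generateFrom {s : Set Ω | P s = 0}] s →
        MeasurableSet s ∧ (P s = 0 ∨ P s = 1) := fun s hs =>
      generateFrom_null_le_trivialM P hcomplete s hs
    refine ⟨?_, hBM.2.1, fun s t hst => ⟨(hBM.2.2 s t hst).1, ?_⟩⟩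
    · intro t
      have h1 : MeasurableSpace.comap (fun ω => Y ω t) inferInstance ≤
          MeasurableSpace.comap Y (coordF d t) := by
        rw [coordF, MeasurableSpace.comap_iSup]
        refine le_iSup_of_le t ?_
        rw [MeasurableSpace.comap_iSup]
        refine le_iSup_of_le le_rfl ?_
        rw [MeasurableSpace.comap_comp]
        exact le_rfl
      refine Measurable.of_comap_le (le_trans h1 ?_)
      exact le_trans le_sup_left le_sup_right
    · -- independence of the increment from the joint filtration
      have hincr : Measurable (fun ω => Y ω t - Y ω s) :=
        ((heval t).comp hY).sub ((heval s).comp hY)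
      have hindep𝒜 : Indep (MeasurableSpace.comap (fun ω => Y ω t - Y ω s) inferInstance)
          (𝒜 s) P := (hBM𝒜.2.2 s t hst).2
      have hsup : Indep (MeasurableSpace.comap (fun ω => Y ω t - Y ω s) inferInstance)
          (𝒜 s ⊔ MeasurableSpace.generateFrom {s : Set Ω | P s = 0}) P :=
        indep_sup_trivial hincr.comap_le (hle s) htriv hindep𝒜
      refine indep_mono hsup le_rfl ?_
      refine sup_le ?_ ?_
      · exact le_trans (hadX s) le_sup_left
      · exact sup_le (le_trans (hcomapY s) le_sup_left) le_sup_right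
end
end
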